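/- arXiv:0906.2988 — 2 statements merged into one kernel-verified Lean document; each statement's English description precedes it below -/
import Mathlib

section
/- The bilinear form a(f,g) = ∫₀¹ (f'·g'' − g'·f'') dt on smooth 1-periodic functions satisfies the 2-cocycle identity for the Lie algebra of vector fields on S¹: a([f,g],h) + a([g,h],f) + a([h,f],g) = 0, where [f,g] = f·g' − g·f'. -/
private lemma periodic_deriv' (f : ℝ → ℝ) (hp : Function.Periodic f 1) :
    Function.Periodic (deriv f) 1 := by
  intro t
  conv_rhs => rw [show f = fun s => f (s + 1) from funext fun s => (hp s).symm]
  rw [deriv_comp_add_const]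

private lemma deriv_br' (p q : ℝ → ℝ) (hp : ContDiff ℝ ((⊤:ℕ∞)) p) (hq : ContDiff ℝ ((⊤:ℕ∞)) q) :
    deriv (fun t => p t * deriv q t - q t * deriv p t)
      = fun t => p t * deriv (deriv q) t - q t * deriv (deriv p) t := by
  funext t
  have hp0 := ((hp.differentiable (by simp)) t).hasDerivAt
  have hq0 := ((hq.differentiable (by simp)) t).hasDerivAt
  have hp1 := (((contDiff_infty_iff_deriv.mp hp).2.differentiable (by simp)) t).hasDerivAt
  have hq1 := (((contDiff_infty_iff_deriv.mp hq).2.differentiable (by simp)) t).hasDerivAt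
  have : HasDerivAt (fun t => p t * deriv q t - q t * deriv p t)
      (p t * deriv (deriv q) t - q t * deriv (deriv p) t) t := by
    have := ((hp0.mul hq1).sub (hq0.mul hp1) : HasDerivAt (fun t => p t * deriv q t - q t * deriv p t) _ t)
    exact this.congr_deriv (by ring)
  exact this.deriv

private lemma deriv_br2' (p q : ℝ → ℝ) (hp : ContDiff ℝ ((⊤:ℕ∞)) p) (hq : ContDiff ℝ ((⊤:ℕ∞)) q) :
    deriv (fun t => p t * deriv (deriv q) t - q t * deriv (deriv p) t)
      = fun t => deriv p t * deriv (deriv q) t + p t * deriv (deriv (deriv q)) t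
          - deriv q t * deriv (deriv p) t - q t * deriv (deriv (deriv p)) t := by
  funext t
  have hp0 := ((hp.differentiable (by simp)) t).hasDerivAt
  have hq0 := ((hq.differentiable (by simp)) t).hasDerivAt
  have hp' := (contDiff_infty_iff_deriv.mp hp).2
  have hq' := (contDiff_infty_iff_deriv.mp hq).2
  have hp2 := (((contDiff_infty_iff_deriv.mp hp').2.differentiable (by simp)) t).hasDerivAt
  have hq2 := (((contDiff_infty_iff_deriv.mp hq').2.differentiable (by simp)) t).hasDerivAt
  have : HasDerivAt (fun t => p t * deriv (deriv q) t - q t * deriv (deriv p) t)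
      (deriv p t * deriv (deriv q) t + p t * deriv (deriv (deriv q)) t
          - deriv q t * deriv (deriv p) t - q t * deriv (deriv (deriv p)) t) t := by
    have := ((hp0.mul hq2).sub (hq0.mul hp2) : HasDerivAt (fun t => p t * deriv (deriv q) t - q t * deriv (deriv p) t) _ t)
    exact this.congr_deriv (by ring)
  exact this.deriv

/-- The bilinear form `a(f,g) = ∫₀¹ (f'·g'' − g'·f'') dt` on smooth 1-periodic
functions satisfies the 2-cocycle identity for the Lie algebra of vector
fields on `S¹`, where `[f,g] = f·g' − g·f'`. -/
theorem gelfand_fuks_cocycle_identity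
    (f g h : ℝ → ℝ)
    (hf : ContDiff ℝ (⊤ : ℕ∞) f) (hg : ContDiff ℝ (⊤ : ℕ∞) g) (hh : ContDiff ℝ (⊤ : ℕ∞) h)
    (hfp : Function.Periodic f 1) (hgp : Function.Periodic g 1)
    (hhp : Function.Periodic h 1)
    (bracket : (ℝ → ℝ) → (ℝ → ℝ) → (ℝ → ℝ))
    (hbracket : ∀ p q : ℝ → ℝ,
      bracket p q = fun t => p t * deriv q t - q t * deriv p t)
    (a : (ℝ → ℝ) → (ℝ → ℝ) → ℝ)
    (ha : ∀ p q : ℝ → ℝ,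
      a p q = ∫ t in (0:ℝ)..1,
        deriv p t * deriv (deriv q) t - deriv q t * deriv (deriv p) t) :
    a (bracket f g) h + a (bracket g h) f + a (bracket h f) g = 0 := by
  -- shorthand for higher derivatives
  have hf : ContDiff ℝ ((⊤:ℕ∞)) f := hf.of_le (by simp)
  have hg : ContDiff ℝ ((⊤:ℕ∞)) g := hg.of_le (by simp)
  have hh : ContDiff ℝ ((⊤:ℕ∞)) h := hh.of_le (by simp)
  have cdf1 : ContDiff ℝ ((⊤:ℕ∞)) (deriv f) := (contDiff_infty_iff_deriv.mp hf).2
  have cdg1 : ContDiff ℝ ((⊤:ℕ∞)) (deriv g) := (contDiff_infty_iff_deriv.mp hg).2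
  have cdh1 : ContDiff ℝ ((⊤:ℕ∞)) (deriv h) := (contDiff_infty_iff_deriv.mp hh).2
  have cdf2 : ContDiff ℝ ((⊤:ℕ∞)) (deriv (deriv f)) := (contDiff_infty_iff_deriv.mp cdf1).2
  have cdg2 : ContDiff ℝ ((⊤:ℕ∞)) (deriv (deriv g)) := (contDiff_infty_iff_deriv.mp cdg1).2
  have cdh2 : ContDiff ℝ ((⊤:ℕ∞)) (deriv (deriv h)) := (contDiff_infty_iff_deriv.mp cdh1).2
  have cdf3 : ContDiff ℝ ((⊤:ℕ∞)) (deriv (deriv (deriv f))) := (contDiff_infty_iff_deriv.mp cdf2).2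
  have cdg3 : ContDiff ℝ ((⊤:ℕ∞)) (deriv (deriv (deriv g))) := (contDiff_infty_iff_deriv.mp cdg2).2
  have cdh3 : ContDiff ℝ ((⊤:ℕ∞)) (deriv (deriv (deriv h))) := (contDiff_infty_iff_deriv.mp cdh2).2
  set f1 := deriv f; set g1 := deriv g; set h1 := deriv h
  set f2 := deriv f1; set g2 := deriv g1; set h2 := deriv h1
  set f3 := deriv f2; set g3 := deriv g2; set h3 := deriv h2
  -- explicit integrands
  set I1 : ℝ → ℝ := fun t =>
    (f t * g2 t - g t * f2 t) * h2 t
      - h1 t * (f1 t * g2 t + f t * g3 t - g1 t * f2 t - g t * f3 t) with hI1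
  set I2 : ℝ → ℝ := fun t =>
    (g t * h2 t - h t * g2 t) * f2 t
      - f1 t * (g1 t * h2 t + g t * h3 t - h1 t * g2 t - h t * g3 t) with hI2
  set I3 : ℝ → ℝ := fun t =>
    (h t * f2 t - f t * h2 t) * g2 t
      - g1 t * (h1 t * f2 t + h t * f3 t - f1 t * h2 t - f t * h3 t) with hI3
  have e1 : a (bracket f g) h = ∫ t in (0:ℝ)..1, I1 t := by
    rw [ha, hbracket, deriv_br' f g hf hg, deriv_br2' f g hf hg]
  have e2 : a (bracket g h) f = ∫ t in (0:ℝ)..1, I2 t := by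
    rw [ha, hbracket, deriv_br' g h hg hh, deriv_br2' g h hg hh]
  have e3 : a (bracket h f) g = ∫ t in (0:ℝ)..1, I3 t := by
    rw [ha, hbracket, deriv_br' h f hh hf, deriv_br2' h f hh hf]
  have cf := hf.continuous; have cg := hg.continuous; have ch := hh.continuous
  have cf1 := cdf1.continuous; have cg1 := cdg1.continuous; have ch1 := cdh1.continuous
  have cf2 := cdf2.continuous; have cg2 := cdg2.continuous; have ch2 := cdh2.continuous
  have cf3 := cdf3.continuous; have cg3 := cdg3.continuous; have ch3 := cdh3.continuous
  have cI1 : Continuous I1 := by rw [hI1]; fun_prop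
  have cI2 : Continuous I2 := by rw [hI2]; fun_prop
  have cI3 : Continuous I3 := by rw [hI3]; fun_prop
  have ii1 : IntervalIntegrable I1 MeasureTheory.volume 0 1 := cI1.intervalIntegrable 0 1
  have ii2 : IntervalIntegrable I2 MeasureTheory.volume 0 1 := cI2.intervalIntegrable 0 1
  have ii3 : IntervalIntegrable I3 MeasureTheory.volume 0 1 := cI3.intervalIntegrable 0 1
  rw [e1, e2, e3, ← intervalIntegral.integral_add ii1 ii2,
    ← intervalIntegral.integral_add (ii1.add ii2) ii3]
  -- the antiderivative
  set W : ℝ → ℝ := fun t =>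
    f2 t * (g t * h1 t - h t * g1 t) + g2 t * (h t * f1 t - f t * h1 t)
      + h2 t * (f t * g1 t - g t * f1 t) with hW
  have key : ∀ t ∈ Set.uIcc (0:ℝ) 1, HasDerivAt W (I1 t + I2 t + I3 t) t := by
    intro t _
    have df := ((hf.differentiable (by simp)) t).hasDerivAt
    have dg := ((hg.differentiable (by simp)) t).hasDerivAt
    have dh := ((hh.differentiable (by simp)) t).hasDerivAt
    have df1 := ((cdf1.differentiable (by simp)) t).hasDerivAt
    have dg1 := ((cdg1.differentiable (by simp)) t).hasDerivAt
    have dh1 := ((cdh1.differentiable (by simp)) t).hasDerivAt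
    have df2 := ((cdf2.differentiable (by simp)) t).hasDerivAt
    have dg2 := ((cdg2.differentiable (by simp)) t).hasDerivAt
    have dh2 := ((cdh2.differentiable (by simp)) t).hasDerivAt
    have hd : HasDerivAt W
        (f3 t * (g t * h1 t - h t * g1 t) + f2 t * (g1 t * h1 t + g t * h2 t - (h1 t * g1 t + h t * g2 t))
          + (g3 t * (h t * f1 t - f t * h1 t) + g2 t * (h1 t * f1 t + h t * f2 t - (f1 t * h1 t + f t * h2 t)))
          + (h3 t * (f t * g1 t - g t * f1 t) + h2 t * (f1 t * g1 t + f t * g2 t - (g1 t * f1 t + g t * f2 t)))) t := by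
      exact ((df2.mul ((dg.mul dh1).sub (dh.mul dg1))).add
          (dg2.mul ((dh.mul df1).sub (df.mul dh1)))).add
          (dh2.mul ((df.mul dg1).sub (dg.mul df1)))
    convert hd using 1
    rw [hI1, hI2, hI3]; ring
  have hsum : (∫ t in (0:ℝ)..1, (I1 t + I2 t + I3 t)) = W 1 - W 0 :=
    intervalIntegral.integral_eq_sub_of_hasDerivAt key ((ii1.add ii2).add ii3)
  have hWp : W 1 = W 0 := by
    have pf1 := periodic_deriv' f hfp
    have pg1 := periodic_deriv' g hgp
    have ph1 := periodic_deriv' h hhp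
    have pf2 := periodic_deriv' f1 pf1
    have pg2 := periodic_deriv' g1 pg1
    have ph2 := periodic_deriv' h1 ph1
    have A0 : f 1 = f 0 := by simpa using hfp 0
    have B0 : g 1 = g 0 := by simpa using hgp 0
    have C0 : h 1 = h 0 := by simpa using hhp 0
    have A1 : f1 1 = f1 0 := by simpa using pf1 0
    have B1 : g1 1 = g1 0 := by simpa using pg1 0
    have C1 : h1 1 = h1 0 := by simpa using ph1 0
    have A2 : f2 1 = f2 0 := by simpa using pf2 0
    have B2 : g2 1 = g2 0 := by simpa using pg2 0
    have C2 : h2 1 = h2 0 := by simpa using ph2 0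
    simp only [hW, A0, B0, C0, A1, B1, C1, A2, B2, C2]
  rw [hsum, hWp, sub_self]
end

section
/- Let σ = u̇^{-2} dt ∧ du̇ ∧ dü and X⁽²⁾ = f ∂/∂t − f'u̇ ∂/∂u̇ − (f''u̇ + 2f'ü) ∂/∂ü. Then L_{X⁽²⁾} σ = 0, i.e., σ is invariant under the prolonged action of every vector field f(t)d/dt on S¹. -/
-- Jet coordinates on `J²(S¹×S¹)`: `t = y 0`, `u = y 1`, `u̇ = y 2`, `ü = y 3`.

/-- The prolonged vector field
`X⁽²⁾ = f ∂/∂t − f'u̇ ∂/∂u̇ − (f''u̇ + 2f'ü) ∂/∂ü`. -/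
noncomputable def prolX (f : ℝ → ℝ) (y : Fin 4 → ℝ) : Fin 4 → ℝ :=
  ![f (y 0), 0, -(deriv f (y 0) * y 2),
    -(deriv (deriv f) (y 0) * y 2 + 2 * deriv f (y 0) * y 3)]

/-- The 3-form `σ = u̇⁻² dt ∧ du̇ ∧ dü`, on constant vectors. -/
noncomputable def jetSigma (y : Fin 4 → ℝ) (a b c : Fin 4 → ℝ) : ℝ :=
  ((y 2) ^ 2)⁻¹ *
    (a 0 * (b 2 * c 3 - b 3 * c 2)
      - a 2 * (b 0 * c 3 - b 3 * c 0)
      + a 3 * (b 0 * c 2 - b 2 * c 0))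

/-- Lie derivative of a 3-form along a vector field, on constant vectors. -/
noncomputable def lieDeriv3 (X : (Fin 4 → ℝ) → (Fin 4 → ℝ))
    (γ : (Fin 4 → ℝ) → (Fin 4 → ℝ) → (Fin 4 → ℝ) → (Fin 4 → ℝ) → ℝ)
    (x : Fin 4 → ℝ) (a b c : Fin 4 → ℝ) : ℝ :=
  fderiv ℝ (fun y => γ y a b c) x (X x)
    + γ x (fderiv ℝ X x a) b c
    + γ x a (fderiv ℝ X x b) c
    + γ x a b (fderiv ℝ X x c)

/-- On `u̇ ≠ 0`, the 3-form `σ = u̇⁻² dt ∧ du̇ ∧ dü` is invariant under the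
prolongation of every vector field `f(t) d/dt` on `S¹`: `L_{X⁽²⁾} σ = 0`. -/
theorem sigma_invariant
    (f : ℝ → ℝ) (hf : ContDiff ℝ (⊤ : ℕ∞) f)
    (x : Fin 4 → ℝ) (hx : x 2 ≠ 0) (a b c : Fin 4 → ℝ) :
    lieDeriv3 (prolX f) jetSigma x a b c = 0 := by
  obtain ⟨hfd, hf1⟩ := contDiff_infty_iff_deriv.mp (hf.of_le (by simp))
  obtain ⟨hfd1, hf2⟩ := contDiff_infty_iff_deriv.mp hf1
  obtain ⟨hfd2, _⟩ := contDiff_infty_iff_deriv.mp hf2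
  set A := deriv f (x 0) with hA
  set B := deriv (deriv f) (x 0) with hB
  set C := deriv (deriv (deriv f)) (x 0) with hC
  have hA' : HasDerivAt f A (x 0) := (hfd (x 0)).hasDerivAt
  have hB' : HasDerivAt (deriv f) B (x 0) := (hfd1 (x 0)).hasDerivAt
  have hC' : HasDerivAt (deriv (deriv f)) C (x 0) := (hfd2 (x 0)).hasDerivAt
  have hp0 : HasFDerivAt (fun y : Fin 4 → ℝ => y 0)
      ((ContinuousLinearMap.proj (R := ℝ) (φ := fun _ : Fin 4 => ℝ) 0)) x := hasFDerivAt_apply (𝕜 := ℝ) 0 x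
  have hp2 : HasFDerivAt (fun y : Fin 4 → ℝ => y 2)
      ((ContinuousLinearMap.proj (R := ℝ) (φ := fun _ : Fin 4 => ℝ) 2)) x := hasFDerivAt_apply (𝕜 := ℝ) 2 x
  have hp3 : HasFDerivAt (fun y : Fin 4 → ℝ => y 3)
      ((ContinuousLinearMap.proj (R := ℝ) (φ := fun _ : Fin 4 => ℝ) 3)) x := hasFDerivAt_apply (𝕜 := ℝ) 3 x
  -- component derivatives of prolX
  have h0 : HasFDerivAt (fun y : Fin 4 → ℝ => f (y 0))
      (A • (ContinuousLinearMap.proj (R := ℝ) (φ := fun _ : Fin 4 => ℝ) 0)) x := hA'.comp_hasFDerivAt x hp0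
  have hdf : HasFDerivAt (fun y : Fin 4 → ℝ => deriv f (y 0))
      (B • (ContinuousLinearMap.proj (R := ℝ) (φ := fun _ : Fin 4 => ℝ) 0)) x := (hB'.comp_hasFDerivAt x hp0 : HasFDerivAt (deriv f ∘ fun y : Fin 4 → ℝ => y 0) _ x)
  have hddf : HasFDerivAt (fun y : Fin 4 → ℝ => deriv (deriv f) (y 0))
      (C • (ContinuousLinearMap.proj (R := ℝ) (φ := fun _ : Fin 4 => ℝ) 0)) x := (hC'.comp_hasFDerivAt x hp0 : HasFDerivAt (deriv (deriv f) ∘ fun y : Fin 4 → ℝ => y 0) _ x)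
  have h2 := (hdf.mul hp2).neg
  have h3 := ((hddf.mul hp2).add ((hdf.const_mul 2).mul hp3)).neg
  have hD : HasFDerivAt (prolX f)
      (ContinuousLinearMap.pi
        ![A • (ContinuousLinearMap.proj (R := ℝ) (φ := fun _ : Fin 4 => ℝ) 0), 0,
          -(deriv f (x 0) • (ContinuousLinearMap.proj (R := ℝ) (φ := fun _ : Fin 4 => ℝ) 2) +
              x 2 • B • (ContinuousLinearMap.proj (R := ℝ) (φ := fun _ : Fin 4 => ℝ) 0)),
          -((deriv (deriv f) (x 0) • (ContinuousLinearMap.proj (R := ℝ) (φ := fun _ : Fin 4 => ℝ) 2) +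
              x 2 • C • (ContinuousLinearMap.proj (R := ℝ) (φ := fun _ : Fin 4 => ℝ) 0)) +
            ((2 * deriv f (x 0)) • (ContinuousLinearMap.proj (R := ℝ) (φ := fun _ : Fin 4 => ℝ) 3) +
              x 3 • (2 : ℝ) • B • (ContinuousLinearMap.proj (R := ℝ) (φ := fun _ : Fin 4 => ℝ) 0)))]) x := by
    apply hasFDerivAt_pi.mpr
    intro i
    fin_cases i
    · simpa [prolX] using h0
    · simpa [prolX] using hasFDerivAt_const (0 : ℝ) x
    · simpa [prolX, mul_comm, Pi.mul_def, Pi.neg_def] using h2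
    · simpa [prolX, mul_comm, mul_assoc, Pi.mul_def, Pi.neg_def, Pi.add_def] using h3
  -- derivative of sigma in y
  set K := (a 0 * (b 2 * c 3 - b 3 * c 2)
      - a 2 * (b 0 * c 3 - b 3 * c 0)
      + a 3 * (b 0 * c 2 - b 2 * c 0)) with hK
  have hs := (((hasDerivAt_pow 2 (x 2)).inv (pow_ne_zero 2 hx)).mul_const K)
  have hσ : HasFDerivAt (fun y : Fin 4 → ℝ => jetSigma y a b c)
      ((-(↑2 * x 2 ^ (2 - 1)) / (x 2 ^ 2) ^ 2 * K) • (ContinuousLinearMap.proj (R := ℝ) (φ := fun _ : Fin 4 => ℝ) 2)) x := by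
    exact hs.comp_hasFDerivAt x hp2
  rw [lieDeriv3, hσ.fderiv, hD.fderiv]
  simp only [jetSigma, prolX, ContinuousLinearMap.smul_apply, ContinuousLinearMap.proj_apply,
    ContinuousLinearMap.pi_apply, ContinuousLinearMap.neg_apply, ContinuousLinearMap.add_apply,
    ContinuousLinearMap.zero_apply, Matrix.cons_val_zero, Matrix.cons_val_one, Matrix.head_cons,
    Matrix.cons_val_two, Matrix.tail_cons, Matrix.cons_val_three, smul_eq_mul, ← hA, ← hB, ← hC]
  field_simp
  ring
end
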